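/- For n ≥ 511, the quantity 2·(4n−7)! / ((n−1)!·(3n−4)!) is strictly greater than 9.1ⁿ, and in particular greater than 3^{2n} = 9ⁿ. -/

import Mathlib

/-!
Writing `n = k + 2`, the quotient is `a k = 2 (4k+1)! / ((k+1)! (3k+2)!)`, and
`a (k+1) / a k = (4k+2)(4k+3)(4k+4)(4k+5) / ((k+2)(3k+3)(3k+4)(3k+5))`, which tends to
`256/27 ≈ 9.48` and is at least `9.1` once `k ≥ 60`. So `a k / 9.1 ^ (k+2)` is increasing there, and
it suffices to check `a k > 9.1 ^ (k+2)` at `n = 511`, the first `n` where it holds; this is an exact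
integer computation done by the kernel.
-/

open Nat

lemma ninety_one_mul_le_ten_mul (k : ℕ) (hk : 60 ≤ k) :
    91 * ((k + 2) * ((3 * k + 3) * (3 * k + 4) * (3 * k + 5))) ≤
      10 * ((4 * k + 2) * (4 * k + 3) * (4 * k + 4) * (4 * k + 5)) := by
  obtain ⟨j, rfl⟩ := Nat.exists_eq_add_of_le hk
  -- the difference of the two sides is a polynomial in `j` with nonnegative coefficients
  ring_nf
  omega

lemma factorial_add_three (n : ℕ) : (n + 3)! = (n + 1) * (n + 2) * (n + 3) * n ! := by
  simp only [factorial_succ]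
  ring

lemma factorial_add_four (n : ℕ) :
    (n + 4)! = (n + 1) * (n + 2) * (n + 3) * (n + 4) * n ! := by
  simp only [factorial_succ]
  ring

set_option maxRecDepth 100000 in
lemma pow_mul_factorial_mul_factorial_lt (k : ℕ) (hk : 509 ≤ k) :
    91 ^ (k + 2) * ((k + 1)! * (3 * k + 2)!) < 2 * 10 ^ (k + 2) * (4 * k + 1)! := by
  induction k, hk using Nat.le_induction with
  | base => decide
  | succ k hk ih =>
    have h3 : (3 * (k + 1) + 2)! = (3 * k + 3) * (3 * k + 4) * (3 * k + 5) * (3 * k + 2)! := by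
      rw [show 3 * (k + 1) + 2 = 3 * k + 2 + 3 by ring, factorial_add_three]
    have h4 : (4 * (k + 1) + 1)! =
        (4 * k + 2) * (4 * k + 3) * (4 * k + 4) * (4 * k + 5) * (4 * k + 1)! := by
      rw [show 4 * (k + 1) + 1 = 4 * k + 1 + 4 by ring, factorial_add_four]
    rw [h3, h4, factorial_succ (k + 1)]
    calc 91 ^ (k + 1 + 2) *
          ((k + 1 + 1) * (k + 1)! * ((3 * k + 3) * (3 * k + 4) * (3 * k + 5) * (3 * k + 2)!))
        = 91 * ((k + 2) * ((3 * k + 3) * (3 * k + 4) * (3 * k + 5))) *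
            (91 ^ (k + 2) * ((k + 1)! * (3 * k + 2)!)) := by ring
      _ < 10 * ((4 * k + 2) * (4 * k + 3) * (4 * k + 4) * (4 * k + 5)) *
            (2 * 10 ^ (k + 2) * (4 * k + 1)!) :=
        Nat.mul_lt_mul_of_le_of_lt (ninety_one_mul_le_ten_mul k (by omega)) ih (by positivity)
      _ = _ := by ring

lemma nine_point_one_pow_lt_factorial_quotient (n : ℕ) (hn : 511 ≤ n) :
    (9.1 : ℝ) ^ n < 2 * ((4 * n - 7)! : ℝ) / (((n - 1)! : ℝ) * ((3 * n - 4)! : ℝ)) := by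
  obtain ⟨k, rfl⟩ : ∃ k, n = k + 2 := ⟨n - 2, by omega⟩
  rw [show 4 * (k + 2) - 7 = 4 * k + 1 by omega, show k + 2 - 1 = k + 1 by omega,
    show 3 * (k + 2) - 4 = 3 * k + 2 by omega, lt_div_iff₀ (by positivity),
    show (9.1 : ℝ) = 91 / 10 by norm_num, div_pow, div_mul_eq_mul_div, div_lt_iff₀ (by positivity)]
  calc (91 : ℝ) ^ (k + 2) * ((k + 1)! * (3 * k + 2)!) < 2 * 10 ^ (k + 2) * (4 * k + 1)! := by
        exact_mod_cast pow_mul_factorial_mul_factorial_lt k (by omega)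
    _ = _ := by ring

/-- Brown's bound: for `n ≥ 511`, `2·(4n-7)! / ((n-1)!·(3n-4)!) > 9.1ⁿ > 3^(2n)`. -/
theorem stmt_19 (n : ℕ) (hn : 511 ≤ n) :
    (9.1 : ℝ) ^ n <
      2 * (Nat.factorial (4 * n - 7) : ℝ) /
        ((Nat.factorial (n - 1) : ℝ) * (Nat.factorial (3 * n - 4) : ℝ)) ∧
    (3 : ℝ) ^ (2 * n) <
      2 * (Nat.factorial (4 * n - 7) : ℝ) /
        ((Nat.factorial (n - 1) : ℝ) * (Nat.factorial (3 * n - 4) : ℝ)) := by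
  have h := nine_point_one_pow_lt_factorial_quotient n hn
  refine ⟨h, lt_of_le_of_lt ?_ h⟩
  rw [pow_mul]
  exact pow_le_pow_left₀ (by norm_num) (by norm_num) n
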